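/- arXiv:0706.3184 — 2 statements merged into one kernel-verified Lean document; each statement's English description precedes it below -/
import Mathlib

section
/- Suppose A ≥ 0, N ≥ 0, |λ| ≤ 1 and the group constraint 3A² = (1−λ²)N² holds. Then the vector x₀ = (−λ/(1+√(1−λ²)), 1) lies in the kernel of M, i.e. M x₀ = 0. -/
noncomputable section

/-- the matrix of the momentum constraint map `(Σ12, Σ13) ↦ (γΩ/G₊)(v2, v3)`. -/
def Mconstraint (A N lam : ℝ) : Matrix (Fin 2) (Fin 2) ℝ :=
  !![N + Real.sqrt 3 * A, lam * N; -(lam * N), -(N - Real.sqrt 3 * A)]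

theorem kernel_eigenvector (A N lam : ℝ) (hA : 0 ≤ A) (hN : 0 ≤ N)
    (hlam : |lam| ≤ 1) (hc : 3*A^2 = (1 - lam^2)*N^2) :
    (Mconstraint A N lam).mulVec ![-lam/(1 + Real.sqrt (1 - lam^2)), 1] = 0 := by
  set s := Real.sqrt (1 - lam^2) with hs
  have hl2 : (0:ℝ) ≤ 1 - lam^2 := by
    have := abs_nonneg lam
    nlinarith [sq_abs lam, abs_nonneg lam]
  have hs0 : 0 ≤ s := Real.sqrt_nonneg _
  have hs2 : s^2 = 1 - lam^2 := Real.sq_sqrt hl2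
  have hsp : (0:ℝ) < 1 + s := by linarith
  have h1 : Real.sqrt 3 * A = s * N := by
    rw [hs, ← Real.sqrt_sq hA, ← Real.sqrt_sq hN, ← Real.sqrt_mul (by norm_num),
      ← Real.sqrt_mul hl2]
    exact congrArg Real.sqrt hc
  funext i
  fin_cases i <;>
    simp [Mconstraint, Matrix.mulVec, dotProduct, h1] <;>
    (try field_simp) <;> (try nlinarith [hs2])
end
end

section
/- Suppose A ≥ 0, N ≥ 0, |λ| ≤ 1, the group constraint 3A² = (1−λ²)N² holds, and γΩ ≠ 0. If real numbers v2, v3, Σ12, Σ13 satisfy the momentum constraint equations (γΩ/G+)·v2 = Σ12(N+√3·A) + Σ13·λN and (γΩ/G+)·v3 = −(Σ13(N−√3·A) + Σ12·λN), then the tilt components obey (1+√(1−λ²))·v3 = −λ·v2, i.e. v3 = −λ v2/(1+√(1−λ²)). -/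
noncomputable section

theorem tilt_relation (γ Om Gplus A N lam v2 v3 S12 S13 : ℝ)
    (hG : Gplus ≠ 0) (hA : 0 ≤ A) (hN : 0 ≤ N) (hlam : |lam| ≤ 1)
    (hc : 3*A^2 = (1 - lam^2)*N^2) (hγOm : γ*Om ≠ 0)
    (h2 : γ*Om/Gplus * v2 = S12*(N + Real.sqrt 3*A) + S13*lam*N)
    (h3 : γ*Om/Gplus * v3 = -(S13*(N - Real.sqrt 3*A) + S12*lam*N)) :
    (1 + Real.sqrt (1 - lam^2)) * v3 = -lam * v2 := by
  have hl2 : (0:ℝ) ≤ 1 - lam^2 := by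
    have := abs_le.mp hlam
    nlinarith [this.1, this.2]
  set s := Real.sqrt (1 - lam^2) with hsdef
  have hs2 : s^2 = 1 - lam^2 := Real.sq_sqrt hl2
  have hs0 : 0 ≤ s := Real.sqrt_nonneg _
  have hkey : Real.sqrt 3 * A = s * N := by
    have h3' : (Real.sqrt 3)^2 = 3 := Real.sq_sqrt (by norm_num)
    have hnn : 0 ≤ Real.sqrt 3 * A := mul_nonneg (Real.sqrt_nonneg _) hA
    have hnn' : 0 ≤ s * N := mul_nonneg hs0 hN
    have hsq : (Real.sqrt 3 * A)^2 = (s * N)^2 := by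
      ring_nf
      nlinarith [h3', hs2, hc]
    nlinarith [hsq, hnn, hnn']
  have hk : γ*Om/Gplus ≠ 0 := div_ne_zero hγOm hG
  have hmain : (γ*Om/Gplus) * ((1 + s) * v3) = (γ*Om/Gplus) * (-lam * v2) := by
    have e2 := h2
    have e3 := h3
    rw [hkey] at e2 e3
    calc (γ*Om/Gplus) * ((1 + s) * v3) = (1 + s) * (γ*Om/Gplus * v3) := by ring
      _ = (1 + s) * (-(S13*(N - s*N) + S12*lam*N)) := by rw [e3]
      _ = -lam * (S12*(N + s*N) + S13*lam*N) := by linear_combination S13*N*hs2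
      _ = -lam * (γ*Om/Gplus * v2) := by rw [e2]
      _ = (γ*Om/Gplus) * (-lam * v2) := by ring
  exact mul_left_cancel₀ hk hmain
end
end
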